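/- arXiv:0807.3489 — 5 statements merged into one kernel-verified Lean document; each statement's English description precedes it below -/
import Mathlib

section
/- Let p, q be coprime positive integers such that p/q is not an even integer, set ρ = p/q, and let Ω0 > 0. Suppose u0 : ℝ → ℝ is C¹ with u0(τ + πρ) = −u0(τ) for all τ, b : ℝ → ℝ is continuous with b(τ + πρ) = −b(τ) for all τ, and F̃ : ℝ → ℝ is continuous and πρ-periodic. Then for every τ0 ∈ ℝ the following integrals all vanish: ∫₀^{2πp} e^{F̃(τ)} b(τ) (ρΩ0)⁻¹ u̇0(τ)(3u0(τ)² − 1) sin(τ+τ0) dτ = 0, ∫₀^{2πp} e^{F̃(τ)} b(τ) (ρΩ0)⁻² u0(τ)(u0(τ)² − 1) sin(τ+τ0) dτ = 0, and ∫₀^{2πp} e^{F̃(τ)} b(τ) (ρΩ0)⁻¹ u0(τ)(u0(τ)² − 1) cos(τ+τ0) dτ = 0. (Hence the first-order compatibility condition forces ε1 = 0 for all resonances p:q with p/q not an even integer.) -/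
/-!
Each integrand is `g τ · sin (τ + τ0)` or `g τ · cos (τ + τ0)` with `g` continuous and
`πρ`-periodic, being a product of two `πρ`-antiperiodic factors. Over `[0, 2πp]`, which is both
a whole number of periods of `g` and of `e^{iτ}`, translating by `πρ` multiplies
`∫ g(τ) e^{i(τ+τ0)} dτ` by `e^{iπρ}`, and `e^{iπρ} ≠ 1` exactly because `ρ` is not an even
integer. So this complex integral vanishes, and its imaginary and real parts are the integrals
in question.
-/

open Real Complex

theorem Function.Antiperiodic.deriv {𝕜 F : Type*} [NontriviallyNormedField 𝕜]
    [NormedAddCommGroup F] [NormedSpace 𝕜 F] {f : 𝕜 → F} {c : 𝕜}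
    (hf : Function.Antiperiodic f c) : Function.Antiperiodic (deriv f) c := by
  intro x
  rw [← deriv_comp_add_const, show (fun y => f (y + c)) = -f from funext hf, deriv.neg']

theorem intervalIntegral_eq_zero_of_periodic_of_add_eq_smul {𝕜 E : Type*} [NormedField 𝕜]
    [NormedAddCommGroup E] [NormedSpace ℝ E] [NormedSpace 𝕜 E] [SMulCommClass ℝ 𝕜 E]
    {f : ℝ → E} {L T : ℝ} {c : 𝕜} (hL : Function.Periodic f L)
    (hT : ∀ x, f (x + T) = c • f x) (hc : c ≠ 1) :
    ∫ x in (0 : ℝ)..L, f x = 0 := by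
  have hfix : ∫ x in (0 : ℝ)..L, f x = c • ∫ x in (0 : ℝ)..L, f x :=
    calc ∫ x in (0 : ℝ)..L, f x = ∫ x in T..T + L, f x := by
          simpa using hL.intervalIntegral_add_eq 0 T
      _ = ∫ x in (0 : ℝ)..L, f (x + T) := by
          rw [intervalIntegral.integral_comp_add_right, zero_add, add_comm]
      _ = c • ∫ x in (0 : ℝ)..L, f x := by
          simp_rw [hT]; exact intervalIntegral.integral_smul c f
  have hsub : (1 - c) • ∫ x in (0 : ℝ)..L, f x = 0 := by
    rw [sub_smul, one_smul, ← hfix, sub_self]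
  exact (smul_eq_zero.mp hsub).resolve_left (sub_ne_zero.mpr hc.symm)

theorem intervalIntegral_mul_cexp_eq_zero_of_periodic {g : ℝ → ℝ} {L T : ℝ}
    (hgT : Function.Periodic g T) (hgL : Function.Periodic g L) (hL : ∃ n : ℤ, L = n * (2 * π))
    (hT : Real.cos T ≠ 1) (τ0 : ℝ) :
    ∫ τ in (0 : ℝ)..L, (g τ : ℂ) * cexp ((τ + τ0 : ℝ) * I) = 0 := by
  obtain ⟨n, rfl⟩ := hL
  refine intervalIntegral_eq_zero_of_periodic_of_add_eq_smul (T := T) (c := cexp (T * I))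
    ?_ ?_ ?_
  · intro τ
    have : ((τ + n * (2 * π) + τ0 : ℝ) : ℂ) * I = (τ + τ0 : ℝ) * I + n * (2 * π * I) := by
      push_cast; ring
    dsimp only
    rw [hgL, this, Complex.exp_add, Complex.exp_int_mul_two_pi_mul_I, mul_one]
  · intro τ
    rw [hgT, smul_eq_mul, mul_left_comm, ← Complex.exp_add]
    congr 2
    push_cast
    ring
  · intro h
    exact hT (by simpa using congrArg Complex.re h)

theorem intervalIntegral_mul_sin_add_eq_zero_and_mul_cos_add_eq_zero {g : ℝ → ℝ} {L T : ℝ}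
    (hg : Continuous g) (hgT : Function.Periodic g T) (hgL : Function.Periodic g L)
    (hL : ∃ n : ℤ, L = n * (2 * π)) (hT : Real.cos T ≠ 1) (τ0 : ℝ) :
    ∫ τ in (0 : ℝ)..L, g τ * Real.sin (τ + τ0) = 0 ∧
      ∫ τ in (0 : ℝ)..L, g τ * Real.cos (τ + τ0) = 0 := by
  have hcont : Continuous fun τ : ℝ => (g τ : ℂ) * cexp ((τ + τ0 : ℝ) * I) := by fun_prop
  have hint := hcont.intervalIntegrable (μ := MeasureTheory.volume) 0 L
  have hzero := intervalIntegral_mul_cexp_eq_zero_of_periodic hgT hgL hL hT τ0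
  constructor
  · simpa only [imCLM_apply, Complex.im_ofReal_mul, Complex.exp_ofReal_mul_I_im, hzero,
      Complex.zero_im] using imCLM.intervalIntegral_comp_comm hint
  · simpa only [reCLM_apply, Complex.re_ofReal_mul, Complex.exp_ofReal_mul_I_re, hzero,
      Complex.zero_re] using reCLM.intervalIntegral_comp_comm hint

theorem Real.cos_pi_mul_ne_one {x : ℝ} (hx : ¬ ∃ m : ℤ, x = 2 * m) : Real.cos (π * x) ≠ 1 := by
  rw [Ne, Real.cos_eq_one_iff]
  rintro ⟨m, hm⟩
  exact hx ⟨m, by nlinarith [Real.pi_pos]⟩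

theorem first_order_compatibility_vanishes_general
    (p q : ℕ) (hq : 0 < q)
    (hnoteven : ¬ ∃ m : ℤ, (p : ℝ) / q = 2 * m)
    (Ω0 : ℝ)
    (u0 : ℝ → ℝ) (hu0 : ContDiff ℝ 1 u0)
    (hu0anti : ∀ τ : ℝ, u0 (τ + π * ((p : ℝ) / q)) = - u0 τ)
    (b : ℝ → ℝ) (hb : Continuous b)
    (hbanti : ∀ τ : ℝ, b (τ + π * ((p : ℝ) / q)) = - b τ)
    (F : ℝ → ℝ) (hF : Continuous F)
    (hFper : Function.Periodic F (π * ((p : ℝ) / q))) :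
    ∀ τ0 : ℝ,
      (∫ τ in (0:ℝ)..(2 * π * (p : ℝ)),
        Real.exp (F τ) * b τ *
          ((((p : ℝ) / q) * Ω0)⁻¹ * (deriv u0 τ * (3 * (u0 τ) ^ 2 - 1))) *
          Real.sin (τ + τ0)) = 0 ∧
      (∫ τ in (0:ℝ)..(2 * π * (p : ℝ)),
        Real.exp (F τ) * b τ *
          (((((p : ℝ) / q) * Ω0)⁻¹) ^ 2 * (u0 τ * ((u0 τ) ^ 2 - 1))) *
          Real.sin (τ + τ0)) = 0 ∧
      (∫ τ in (0:ℝ)..(2 * π * (p : ℝ)),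
        Real.exp (F τ) * b τ *
          ((((p : ℝ) / q) * Ω0)⁻¹ * (u0 τ * ((u0 τ) ^ 2 - 1))) *
          Real.cos (τ + τ0)) = 0 := by
  intro τ0
  set T : ℝ := π * ((p : ℝ) / q)
  have hLT : 2 * π * (p : ℝ) = ((2 * q : ℕ) : ℝ) * T := by
    simp only [T]; push_cast; field_simp
  have hvanish : ∀ g : ℝ → ℝ, Continuous g → Function.Periodic g T →
      ∫ τ in (0 : ℝ)..2 * π * p, g τ * Real.sin (τ + τ0) = 0 ∧
        ∫ τ in (0 : ℝ)..2 * π * p, g τ * Real.cos (τ + τ0) = 0 := fun g hg hgT =>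
    intervalIntegral_mul_sin_add_eq_zero_and_mul_cos_add_eq_zero hg hgT
      (hLT ▸ hgT.nat_mul _) ⟨p, by push_cast; ring⟩ (Real.cos_pi_mul_ne_one hnoteven) τ0
  have hu0' : Function.Antiperiodic (deriv u0) T := Function.Antiperiodic.deriv hu0anti
  have hu0c := hu0.continuous
  have hu0'c := hu0.continuous_deriv le_rfl
  refine ⟨(hvanish _ (by fun_prop) ?_).1, (hvanish _ (by fun_prop) ?_).1,
    (hvanish _ (by fun_prop) ?_).2⟩ <;>
  · intro τ
    simp only [hFper τ, hbanti τ, hu0anti τ, hu0' τ]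
    ring

/-- First-order compatibility: for a resonance `p:q` with `p/q` not an even
integer, the coefficients `B₁(τ0)`, `B₂(τ0)`, `B₃(τ0)` of the first-order
locking condition all vanish (hence `ε₁ = 0`).  Here `ρ = p/q`. -/
theorem first_order_compatibility_vanishes
    (p q : ℕ) (hp : 0 < p) (hq : 0 < q) (hpq : Nat.Coprime p q)
    (hnoteven : ¬ ∃ m : ℤ, (p : ℝ) / q = 2 * m)
    (Ω0 : ℝ) (hΩ0 : 0 < Ω0)
    (u0 : ℝ → ℝ) (hu0 : ContDiff ℝ 1 u0)
    (hu0anti : ∀ τ : ℝ, u0 (τ + π * ((p : ℝ) / q)) = - u0 τ)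
    (b : ℝ → ℝ) (hb : Continuous b)
    (hbanti : ∀ τ : ℝ, b (τ + π * ((p : ℝ) / q)) = - b τ)
    (F : ℝ → ℝ) (hF : Continuous F)
    (hFper : Function.Periodic F (π * ((p : ℝ) / q))) :
    ∀ τ0 : ℝ,
      (∫ τ in (0:ℝ)..(2 * π * (p : ℝ)),
        Real.exp (F τ) * b τ *
          ((((p : ℝ) / q) * Ω0)⁻¹ * (deriv u0 τ * (3 * (u0 τ) ^ 2 - 1))) *
          Real.sin (τ + τ0)) = 0 ∧
      (∫ τ in (0:ℝ)..(2 * π * (p : ℝ)),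
        Real.exp (F τ) * b τ *
          (((((p : ℝ) / q) * Ω0)⁻¹) ^ 2 * (u0 τ * ((u0 τ) ^ 2 - 1))) *
          Real.sin (τ + τ0)) = 0 ∧
      (∫ τ in (0:ℝ)..(2 * π * (p : ℝ)),
        Real.exp (F τ) * b τ *
          ((((p : ℝ) / q) * Ω0)⁻¹ * (u0 τ * ((u0 τ) ^ 2 - 1))) *
          Real.cos (τ + τ0)) = 0 :=
  first_order_compatibility_vanishes_general p q hq hnoteven Ω0 u0 hu0 hu0anti b hb hbanti F hF
    hFper
end

section
/- Let α > β > 1 and consider the Liénard equation u″ + h(u)u′ + k(u) = 0 with h(u) = 1 − β + 3βu² and k(u) = (α − β)u + βu³. Suppose u0 is a nonconstant periodic C² solution with minimal period T0 > 0, and suppose that every nonconstant periodic solution of the equation is a time translate of u0 (uniqueness of the limit cycle). Then u0(t + T0/2) = −u0(t) for all t ∈ ℝ. -/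
/-!
Since `h` is even and `k` is odd, `-u0` is again a nonconstant periodic solution, so by uniqueness
of the limit cycle `-u0 = u0(· + c)` for some `c`: `c` is an antiperiod of `u0`. Then `2c` is a
period, hence an integer multiple `n T0` of the minimal period. If `n` were even, `c` itself would
be a period, forcing `u0 = -u0 = 0`; so `n` is odd and `T0 / 2 ≡ c` modulo `T0` is an antiperiod.
-/

namespace Function

variable {𝕜 β : Type*} [Field 𝕜] [LinearOrder 𝕜] [IsStrictOrderedRing 𝕜] [FloorRing 𝕜]
  {f : 𝕜 → β} {T : 𝕜}

theorem Periodic.exists_int_mul_eq_of_minimal (hT : 0 < T) (hf : Periodic f T)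
    (hmin : ∀ p, 0 < p → Periodic f p → T ≤ p) {p : 𝕜} (hp : Periodic f p) :
    ∃ n : ℤ, p = n * T := by
  set n := ⌊p / T⌋
  have hrem : Periodic f (p - n * T) := hp.sub_period (hf.int_mul n)
  have hrem_nonneg : 0 ≤ p - n * T := by
    have := (le_div_iff₀ hT).mp (Int.floor_le (p / T))
    linarith
  have hrem_lt : p - n * T < T := by
    have := (div_lt_iff₀ hT).mp (Int.lt_floor_add_one (p / T))
    linarith
  refine ⟨n, ?_⟩
  by_contra hne
  have := hmin _ (lt_of_le_of_ne hrem_nonneg (Ne.symm (sub_ne_zero.mpr hne))) hrem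
  linarith

theorem Antiperiodic.antiperiodic_half_of_minimal [AddGroup β] [IsAddTorsionFree β]
    (hnc : ∃ a b, f a ≠ f b) (hT : 0 < T) (hf : Periodic f T)
    (hmin : ∀ p, 0 < p → Periodic f p → T ≤ p) {c : 𝕜} (hc : Antiperiodic f c) :
    Antiperiodic f (T / 2) := by
  obtain ⟨n, hn⟩ := hf.exists_int_mul_eq_of_minimal hT hmin hc.periodic_two_mul
  rcases Int.even_or_odd' n with ⟨m, rfl | rfl⟩
  · have hcm : c = m * T := by push_cast at hn; linarith
    have hzero : ∀ x, f x = 0 := fun x ↦ self_eq_neg.mp <| by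
      rw [← hc x, hcm, (hf.int_mul m) x]
    obtain ⟨a, b, hab⟩ := hnc
    exact absurd (by rw [hzero a, hzero b]) hab
  · have hcm : T / 2 = c - m * T := by push_cast at hn; linarith
    rw [hcm]
    simpa only [neg_sub] using ((hf.int_mul m).sub_antiperiod hc).neg

end Function

def IsLienardSolution (h k : ℝ → ℝ) (u : ℝ → ℝ) : Prop :=
  ∀ t, deriv (deriv u) t + h (u t) * deriv u t + k (u t) = 0

theorem IsLienardSolution.neg {h k u : ℝ → ℝ} (hh : h.Even) (hk : k.Odd)
    (hu : IsLienardSolution h k u) : IsLienardSolution h k (-u) := by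
  intro t
  have hderiv : deriv (-u) = -deriv u := funext fun _ ↦ deriv.neg
  rw [hderiv, Pi.neg_apply, deriv.neg, Pi.neg_apply, hh, hk]
  linear_combination -hu t

theorem limit_cycle_antiperiodic_general
    (α β : ℝ)
    (u0 : ℝ → ℝ) (hu0C : ContDiff ℝ 2 u0)
    (hnc : ∃ a b : ℝ, u0 a ≠ u0 b)
    (T0 : ℝ) (hT0 : 0 < T0) (hper : Function.Periodic u0 T0)
    (hmin : ∀ T : ℝ, 0 < T → Function.Periodic u0 T → T0 ≤ T)
    (hode : ∀ t : ℝ,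
      deriv (deriv u0) t + (1 - β + 3 * β * (u0 t) ^ 2) * deriv u0 t
        + ((α - β) * u0 t + β * (u0 t) ^ 3) = 0)
    (huniq : ∀ v : ℝ → ℝ, ContDiff ℝ 2 v → (∃ a b : ℝ, v a ≠ v b) →
      (∃ T > (0:ℝ), Function.Periodic v T) →
      (∀ t : ℝ,
        deriv (deriv v) t + (1 - β + 3 * β * (v t) ^ 2) * deriv v t
          + ((α - β) * v t + β * (v t) ^ 3) = 0) →
      ∃ c : ℝ, ∀ t : ℝ, v t = u0 (t + c)) :
    ∀ t : ℝ, u0 (t + T0 / 2) = - u0 t := by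
  have hsol : IsLienardSolution (fun x ↦ 1 - β + 3 * β * x ^ 2)
      (fun x ↦ (α - β) * x + β * x ^ 3) (-u0) :=
    IsLienardSolution.neg (fun x ↦ by ring) (fun x ↦ by ring) hode
  have hnc_neg : ∃ a b, (-u0) a ≠ (-u0) b := by
    obtain ⟨a, b, hab⟩ := hnc
    exact ⟨a, b, fun h ↦ hab (neg_injective h)⟩
  obtain ⟨c, hc⟩ := huniq (-u0) hu0C.neg hnc_neg ⟨T0, hT0, fun t ↦ congrArg Neg.neg (hper t)⟩ hsol
  have hanti : Function.Antiperiodic u0 c := fun t ↦ (hc t).symm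
  exact hanti.antiperiodic_half_of_minimal hnc hT0 hper hmin

/-- Symmetry of the limit cycle of the Liénard equation
`u'' + (1 - β + 3βu²)u' + ((α-β)u + βu³) = 0` with `α > β > 1`:
if `u0` is a nonconstant periodic solution with minimal period `T0`, and every
nonconstant periodic solution is a time translate of `u0`, then
`u0(t + T0/2) = -u0(t)`. -/
theorem limit_cycle_antiperiodic
    (α β : ℝ) (hβ : 1 < β) (hαβ : β < α)
    (u0 : ℝ → ℝ) (hu0C : ContDiff ℝ 2 u0)
    (hnc : ∃ a b : ℝ, u0 a ≠ u0 b)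
    (T0 : ℝ) (hT0 : 0 < T0) (hper : Function.Periodic u0 T0)
    (hmin : ∀ T : ℝ, 0 < T → Function.Periodic u0 T → T0 ≤ T)
    (hode : ∀ t : ℝ,
      deriv (deriv u0) t + (1 - β + 3 * β * (u0 t) ^ 2) * deriv u0 t
        + ((α - β) * u0 t + β * (u0 t) ^ 3) = 0)
    (huniq : ∀ v : ℝ → ℝ, ContDiff ℝ 2 v → (∃ a b : ℝ, v a ≠ v b) →
      (∃ T > (0:ℝ), Function.Periodic v T) →
      (∀ t : ℝ,
        deriv (deriv v) t + (1 - β + 3 * β * (v t) ^ 2) * deriv v t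
          + ((α - β) * v t + β * (v t) ^ 3) = 0) →
      ∃ c : ℝ, ∀ t : ℝ, v t = u0 (t + c)) :
    ∀ t : ℝ, u0 (t + T0 / 2) = - u0 t :=
  limit_cycle_antiperiodic_general α β u0 hu0C hnc T0 hT0 hper hmin hode huniq
end

section
/- Let T > 0, let P : ℝ → ℂ be a continuous T-periodic function, and let C be a nonzero real constant. Then there exists a continuous T-periodic function Q : ℝ → ℂ and a constant D such that ∫₀^τ e^{Cτ′} P(τ′) dτ′ = D + e^{Cτ} Q(τ) for all τ ∈ ℝ, and moreover D = −Q(0). -/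
/-!
Write `F τ = ∫₀^τ e^{Cs} P(s) ds` and `λ = e^{CT}`. Periodicity of `P` gives the twisted relation
`F (τ + T) = λ F τ + F T`. Since `CT ≠ 0` we have `λ ≠ 1`, so `F` has the affine fixed point
`D = F T / (1 - λ)`, and `G = F - D` satisfies `G (τ + T) = λ G τ`. Then `Q τ = e^{-Cτ} G τ` is
`T`-periodic, `F τ = D + e^{Cτ} Q τ`, and `Q 0 = F 0 - D = -D`.
-/

section ShiftEqSmul

variable {𝕜 E : Type*} [NormedAddCommGroup E] [NormedSpace ℝ E] [NormedDivisionRing 𝕜]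
  [Module 𝕜 E] [NormSMulClass 𝕜 E] [SMulCommClass ℝ 𝕜 E]

theorem intervalIntegral.integral_zero_add_of_shift_eq_smul {f : ℝ → E} {T : ℝ} {c : 𝕜}
    (hf : ∀ a b, IntervalIntegrable f MeasureTheory.volume a b)
    (htw : ∀ s, f (s + T) = c • f s) (τ : ℝ) :
    ∫ s in (0 : ℝ)..τ + T, f s = c • (∫ s in (0 : ℝ)..τ, f s) + ∫ s in (0 : ℝ)..T, f s := by
  have hshift : ∫ s in T..τ + T, f s = c • ∫ s in (0 : ℝ)..τ, f s := by
    calc ∫ s in T..τ + T, f s = ∫ s in (0 : ℝ)..τ, f (s + T) := by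
          rw [intervalIntegral.integral_comp_add_right, zero_add]
      _ = ∫ s in (0 : ℝ)..τ, c • f s := by simp only [htw]
      _ = c • ∫ s in (0 : ℝ)..τ, f s := intervalIntegral.integral_smul c f
  rw [← intervalIntegral.integral_add_adjacent_intervals (hf 0 T) (hf T (τ + T)), hshift, add_comm]

end ShiftEqSmul

theorem sub_fixedPoint_shift_eq_smul {K V : Type*} [Field K] [AddCommGroup V] [Module K V]
    {F : ℝ → V} {T : ℝ} {c : K} (hc : c ≠ 1) (hF : ∀ τ, F (τ + T) = c • F τ + F T) (τ : ℝ) :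
    F (τ + T) - (1 - c)⁻¹ • F T = c • (F τ - (1 - c)⁻¹ • F T) := by
  set D := (1 - c)⁻¹ • F T
  have hD : (1 - c) • D = F T := by
    rw [smul_smul, mul_inv_cancel₀ (sub_ne_zero.mpr hc.symm), one_smul]
  rw [sub_smul, one_smul] at hD
  rw [hF, smul_sub, ← hD]
  abel

theorem Complex.exp_ofReal_mul_add (C s t : ℝ) :
    Complex.exp ((C * (s + t) : ℝ) : ℂ) =
      Complex.exp ((C * t : ℝ) : ℂ) * Complex.exp ((C * s : ℝ) : ℂ) := by
  rw [← Complex.exp_add, ← Complex.ofReal_add]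
  ring_nf

theorem periodic_exp_neg_mul_of_shift_eq_exp_mul {G : ℝ → ℂ} {C T : ℝ}
    (hG : ∀ τ, G (τ + T) = Complex.exp ((C * T : ℝ) : ℂ) * G τ) :
    Function.Periodic (fun τ => Complex.exp ((-(C * τ) : ℝ) : ℂ) * G τ) T := by
  intro τ
  simp only [hG, ← mul_assoc, ← Complex.exp_add, ← Complex.ofReal_add]
  ring_nf

theorem Complex.exp_ofReal_ne_one {x : ℝ} (hx : x ≠ 0) : Complex.exp (x : ℂ) ≠ 1 := by
  rw [← Complex.ofReal_exp, Ne, Complex.ofReal_eq_one, Real.exp_eq_one_iff]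
  exact hx

/-- Key integration lemma (Lemma 6.2): for a continuous `T`-periodic `P` and a
nonzero real constant `C`, the primitive of `e^{Cτ}P(τ)` is of the form
`D + e^{Cτ}Q(τ)` with `Q` continuous `T`-periodic and `D = -Q(0)`. -/
theorem primitive_of_exp_mul_periodic
    (T : ℝ) (hT : 0 < T) (P : ℝ → ℂ) (hP : Continuous P)
    (hper : Function.Periodic P T) (C : ℝ) (hC : C ≠ 0) :
    ∃ Q : ℝ → ℂ, Continuous Q ∧ Function.Periodic Q T ∧ ∃ D : ℂ,
      (∀ τ : ℝ, (∫ s in (0:ℝ)..τ, Complex.exp ((C * s : ℝ) : ℂ) * P s)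
        = D + Complex.exp ((C * τ : ℝ) : ℂ) * Q τ) ∧
      D = - Q 0 := by
  set f : ℝ → ℂ := fun s => Complex.exp ((C * s : ℝ) : ℂ) * P s
  set F : ℝ → ℂ := fun τ => ∫ s in (0:ℝ)..τ, f s
  set D : ℂ := (1 - Complex.exp ((C * T : ℝ) : ℂ))⁻¹ • F T
  have hf : Continuous f := by fun_prop
  have htw (s : ℝ) : f (s + T) = Complex.exp ((C * T : ℝ) : ℂ) • f s := by
    simp only [f, hper s, Complex.exp_ofReal_mul_add, smul_eq_mul, mul_assoc]
  have hG := sub_fixedPoint_shift_eq_smul (F := F)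
    (Complex.exp_ofReal_ne_one (mul_ne_zero hC hT.ne'))
    (intervalIntegral.integral_zero_add_of_shift_eq_smul hf.intervalIntegrable htw)
  refine ⟨fun τ => Complex.exp ((-(C * τ) : ℝ) : ℂ) * (F τ - D),
    ?_, periodic_exp_neg_mul_of_shift_eq_exp_mul hG, D, fun τ => ?_, ?_⟩
  · have hF : Continuous F := intervalIntegral.continuous_primitive hf.intervalIntegrable 0
    fun_prop
  · rw [← mul_assoc, ← Complex.exp_add, ← Complex.ofReal_add, add_neg_cancel, Complex.ofReal_zero,
      Complex.exp_zero, one_mul, add_sub_cancel]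
  · simp [F]
end

section
/- Let f, g : ℝ → ℝ be smooth and let u0 be a C³ (indeed analytic) solution of ü + f(u)u̇ + g(u) = 0 with u̇0(0) = 0 and ü0(0) ≠ 0. Let τ̄ > 0 be such that u̇0(τ) ≠ 0 for all τ ∈ (0, τ̄], and set F(τ) = ∫₀^τ f(u0(s)) ds. Then the limit lim_{τ→0⁺} u̇0(τ) ∫_{τ̄}^{τ} e^{−F(s)}/u̇0(s)² ds exists and is finite; moreover, the function w11(τ) = u̇0(τ) ∫_{τ̄}^{τ} e^{−F(s)}/u̇0(s)² ds, extended by this limit at τ = 0, is differentiable at τ = 0. -/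
open Real Filter

/-- The Wronskian entry `w11(τ) = u̇0(τ) ∫_{τ̄}^τ e^{-F(s)}/u̇0(s)² ds` has a
finite limit as `τ → 0⁺` and, extended by this limit at `τ = 0`, is
differentiable at `τ = 0` (from the right). -/
theorem w11_extends_differentiably
    (f g : ℝ → ℝ) (hf : ContDiff ℝ (⊤ : ℕ∞) f) (hg : ContDiff ℝ (⊤ : ℕ∞) g)
    (u0 : ℝ → ℝ) (hu0 : ContDiff ℝ 3 u0)
    (hode : ∀ τ : ℝ, deriv (deriv u0) τ + f (u0 τ) * deriv u0 τ + g (u0 τ) = 0)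
    (h1 : deriv u0 0 = 0) (h2 : deriv (deriv u0) 0 ≠ 0)
    (τb : ℝ) (hτb : 0 < τb)
    (hne : ∀ τ ∈ Set.Ioc (0:ℝ) τb, deriv u0 τ ≠ 0) :
    ∃ L : ℝ,
      Tendsto (fun τ : ℝ => deriv u0 τ *
          ∫ s in τb..τ, Real.exp (-(∫ r in (0:ℝ)..s, f (u0 r))) / (deriv u0 s) ^ 2)
        (nhdsWithin 0 (Set.Ioi 0)) (nhds L) ∧
      DifferentiableWithinAt ℝ
        (fun τ : ℝ => if τ = 0 then L else deriv u0 τ *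
          ∫ s in τb..τ, Real.exp (-(∫ r in (0:ℝ)..s, f (u0 r))) / (deriv u0 s) ^ 2)
        (Set.Ici 0) 0 := by
  set v := deriv u0 with hv_def
  set E : ℝ → ℝ := fun s => Real.exp (-(∫ r in (0:ℝ)..s, f (u0 r))) with hE_def
  set G : ℝ → ℝ := fun s => g (u0 s) with hG_def
  set hh : ℝ → ℝ := fun s => E s / (v s) ^ 2 with hh_def
  -- basic regularity
  have hcf : Continuous (fun s => f (u0 s)) := hf.continuous.comp hu0.continuous
  have hu0' : ContDiff ℝ (2+1) u0 := hu0
  rw [contDiff_succ_iff_deriv] at hu0'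
  have hu0d : Differentiable ℝ u0 := hu0'.1
  have hvC2 : ContDiff ℝ 2 v := hu0'.2.2
  have hvdiff : Differentiable ℝ v := hvC2.differentiable two_ne_zero
  have hG_cont : Continuous G := hg.continuous.comp hu0.continuous
  have hG'c : Continuous fun s => deriv g (u0 s) :=
    (hg.continuous_deriv (by simp)).comp hu0.continuous
  have hE_deriv : ∀ s, HasDerivAt E (-f (u0 s) * E s) s := by
    intro s
    have hF : HasDerivAt (fun s => ∫ r in (0:ℝ)..s, f (u0 r)) (f (u0 s)) s :=
      (hcf.integral_hasStrictDerivAt 0 s).hasDerivAt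
    simpa [hE_def, mul_comm] using hF.neg.exp
  have hE_cont : Continuous E :=
    continuous_iff_continuousAt.mpr fun s => (hE_deriv s).continuousAt
  have hGd : ∀ s, HasDerivAt G (deriv g (u0 s) * v s) s := by
    intro s
    have hgd : HasDerivAt g (deriv g (u0 s)) (u0 s) :=
      ((hg.differentiable (by simp)) (u0 s)).hasDerivAt
    exact hgd.comp s (hu0d s).hasDerivAt
  have hode' : ∀ s, deriv v s = -(f (u0 s) * v s + G s) := by
    intro s; have := hode s; simp only [hG_def]; linarith
  have hG0 : G 0 ≠ 0 := by
    intro h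
    apply h2
    show deriv v 0 = 0
    rw [hode' 0, h1, h]; ring
  -- choose δ
  have hev : ∀ᶠ s in nhds (0:ℝ), G s ≠ 0 := hG_cont.continuousAt.eventually_ne hG0
  rw [Metric.eventually_nhds_iff] at hev
  obtain ⟨ε, hε, hball⟩ := hev
  set δ := min (ε/2) τb with hδ_def
  have hδ0 : 0 < δ := lt_min (by linarith) hτb
  have hδτb : δ ≤ τb := min_le_right _ _
  have hGδ : ∀ s : ℝ, |s| ≤ δ → G s ≠ 0 := by
    intro s hs
    apply hball
    rw [Real.dist_eq, sub_zero]
    have : δ ≤ ε/2 := min_le_left _ _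
    linarith
  -- φ and ψ
  set φ : ℝ → ℝ := fun s => E s / (v s * G s) with hφ_def
  set ψ : ℝ → ℝ := fun s => E s * deriv g (u0 s) / (G s) ^ 2 with hψ_def
  have hφ' : ∀ s, v s ≠ 0 → G s ≠ 0 → HasDerivAt φ (hh s - ψ s) s := by
    intro s hvs hGs
    have hv : HasDerivAt v (deriv v s) s := (hvdiff s).hasDerivAt
    have hden : v s * G s ≠ 0 := mul_ne_zero hvs hGs
    have hdiv := (hE_deriv s).div (hv.mul (hGd s)) hden
    convert hdiv using 1
    · rfl
    · rfl
    · rfl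
    rw [hh_def, hψ_def, hode' s, Pi.mul_apply]
    field_simp
    ring
  have hψ_at : ∀ s, G s ≠ 0 → ContinuousAt ψ s := by
    intro s hs
    exact (hE_cont.continuousAt.mul hG'c.continuousAt).div
      ((hG_cont.pow 2).continuousAt) (pow_ne_zero 2 hs)
  have hh_at : ∀ s, v s ≠ 0 → ContinuousAt hh s := by
    intro s hs
    exact hE_cont.continuousAt.div ((hvC2.continuous.pow 2).continuousAt) (pow_ne_zero 2 hs)
  -- key identity
  have key : ∀ τ ∈ Set.Ioc (0:ℝ) δ, (∫ s in τb..τ, hh s)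
      = (∫ s in τb..δ, hh s) + ((φ τ - φ δ) + ∫ s in δ..τ, ψ s) := by
    intro τ hτ
    have hsub : Set.uIcc δ τ ⊆ Set.Ioc 0 δ := by
      rw [Set.uIcc_of_ge hτ.2]
      exact fun x hx => ⟨lt_of_lt_of_le hτ.1 hx.1, hx.2⟩
    have hv_on : ∀ x ∈ Set.uIcc δ τ, v x ≠ 0 := fun x hx =>
      hne x ⟨(hsub hx).1, le_trans (hsub hx).2 hδτb⟩
    have hG_on : ∀ x ∈ Set.uIcc δ τ, G x ≠ 0 := fun x hx =>
      hGδ x (abs_le.mpr ⟨by linarith [(hsub hx).1], (hsub hx).2⟩)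
    have hder : ∀ x ∈ Set.uIcc δ τ, HasDerivAt φ (hh x - ψ x) x := fun x hx =>
      hφ' x (hv_on x hx) (hG_on x hx)
    have hcont1 : ContinuousOn hh (Set.uIcc δ τ) := fun x hx =>
      (hh_at x (hv_on x hx)).continuousWithinAt
    have hcont2 : ContinuousOn ψ (Set.uIcc δ τ) := fun x hx =>
      (hψ_at x (hG_on x hx)).continuousWithinAt
    have hint1 : IntervalIntegrable hh MeasureTheory.volume δ τ := hcont1.intervalIntegrable
    have hint2 : IntervalIntegrable ψ MeasureTheory.volume δ τ := hcont2.intervalIntegrable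
    have hFTC := intervalIntegral.integral_eq_sub_of_hasDerivAt hder (hint1.sub hint2)
    have hsplit : (∫ s in δ..τ, (hh s - ψ s)) = (∫ s in δ..τ, hh s) - ∫ s in δ..τ, ψ s :=
      intervalIntegral.integral_sub hint1 hint2
    have hsub2 : Set.uIcc τb δ ⊆ Set.Ioc 0 τb := by
      rw [Set.uIcc_of_ge hδτb]
      exact fun x hx => ⟨lt_of_lt_of_le hδ0 hx.1, hx.2⟩
    have hcont3 : ContinuousOn hh (Set.uIcc τb δ) := fun x hx =>
      (hh_at x (hne x (hsub2 hx))).continuousWithinAt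
    have hint3 : IntervalIntegrable hh MeasureTheory.volume τb δ := hcont3.intervalIntegrable
    have hadj : (∫ s in τb..δ, hh s) + (∫ s in δ..τ, hh s) = ∫ s in τb..τ, hh s :=
      intervalIntegral.integral_add_adjacent_intervals hint3 hint1
    rw [hsplit] at hFTC
    linarith
  -- the smooth extension W
  set A : ℝ := (∫ s in τb..δ, hh s) - φ δ with hA_def
  set W : ℝ → ℝ := fun τ => E τ / G τ + v τ * (A + ∫ s in δ..τ, ψ s) with hW_def
  have heqW : ∀ τ ∈ Set.Ioc (0:ℝ) δ, v τ * (∫ s in τb..τ, hh s) = W τ := by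
    intro τ hτ
    have hvτ : v τ ≠ 0 := hne τ ⟨hτ.1, hτ.2.trans hδτb⟩
    have hGτ : G τ ≠ 0 := hGδ τ (abs_le.mpr ⟨by linarith [hτ.1], hτ.2⟩)
    have hvφ : v τ * φ τ = E τ / G τ := by
      rw [hφ_def]
      field_simp
    rw [key τ hτ, hW_def, hA_def]
    calc v τ * ((∫ s in τb..δ, hh s) + ((φ τ - φ δ) + ∫ s in δ..τ, ψ s))
        = v τ * φ τ + v τ * (((∫ s in τb..δ, hh s) - φ δ) + ∫ s in δ..τ, ψ s) := by ring
      _ = E τ / G τ + v τ * (((∫ s in τb..δ, hh s) - φ δ) + ∫ s in δ..τ, ψ s) := by rw [hvφ]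
  -- W is differentiable at 0
  have hIψ : HasDerivAt (fun τ => ∫ s in δ..τ, ψ s) (ψ 0) 0 := by
    have hU : IsOpen {s : ℝ | G s ≠ 0} := isOpen_compl_singleton.preimage hG_cont
    have hψ_onU : ContinuousOn ψ {s : ℝ | G s ≠ 0} := fun x hx =>
      (hψ_at x hx).continuousWithinAt
    have hmeas : StronglyMeasurableAtFilter ψ (nhds 0) MeasureTheory.volume :=
      hψ_onU.stronglyMeasurableAtFilter hU 0 hG0
    have hint : IntervalIntegrable ψ MeasureTheory.volume δ 0 := by
      apply ContinuousOn.intervalIntegrable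
      intro x hx
      rw [Set.uIcc_of_ge (le_of_lt hδ0)] at hx
      exact (hψ_at x (hGδ x (abs_le.mpr ⟨by linarith [hx.1], hx.2⟩))).continuousWithinAt
    exact (intervalIntegral.integral_hasStrictDerivAt_right hint hmeas (hψ_at 0 hG0)).hasDerivAt
  have hWd : DifferentiableAt ℝ W 0 := by
    apply DifferentiableAt.add
    · exact (hE_deriv 0).differentiableAt.div (hGd 0).differentiableAt hG0
    · exact (hvdiff 0).mul ((differentiableAt_const A).add hIψ.differentiableAt)
  refine ⟨W 0, ?_, ?_⟩
  · -- the limit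
    have hmem : Set.Ioc (0:ℝ) δ ∈ nhdsWithin (0:ℝ) (Set.Ioi 0) :=
      Ioc_mem_nhdsGT_of_mem ⟨le_refl 0, hδ0⟩
    have hEq1 : (fun τ => v τ * ∫ s in τb..τ, hh s) =ᶠ[nhdsWithin (0:ℝ) (Set.Ioi 0)] W :=
      eventually_of_mem hmem heqW
    exact Tendsto.congr' hEq1.symm (hWd.continuousAt.tendsto.mono_left nhdsWithin_le_nhds)
  · -- differentiability of the extension
    have hWdw : DifferentiableWithinAt ℝ W (Set.Ici 0) 0 := hWd.differentiableWithinAt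
    apply hWdw.congr_of_eventuallyEq
    · have hmem : Set.Icc (0:ℝ) δ ∈ nhdsWithin (0:ℝ) (Set.Ici 0) :=
        Icc_mem_nhdsGE_of_mem ⟨le_refl 0, hδ0⟩
      apply eventually_of_mem hmem
      intro x hx
      by_cases hx0 : x = 0
      · simp [hx0]
      · simp only [if_neg hx0]
        exact heqW x ⟨lt_of_le_of_ne hx.1 (Ne.symm hx0), hx.2⟩
    · simp
end

section
/- Let ρ > 0, let f, g : ℝ → ℝ be smooth, and let u0 be a C³ solution of ü + f(u)u̇ + g(u) = 0 such that u̇0(0) = u̇0(πρ) = 0, ü0(0) ≠ 0, and u̇0(τ) ≠ 0 for all τ ∈ (0, πρ). Set F(τ) = ∫₀^τ f(u0(s)) ds. For τ̄ ∈ (0, πρ), let w11^{τ̄}(τ) = u̇0(τ) ∫_{τ̄}^{τ} e^{−F(s)}/u̇0(s)² ds for τ ∈ (0, πρ), extended by its (finite) limit at τ = 0. Then there exists exactly one τ̄ ∈ (0, πρ) for which the derivative of w11^{τ̄} at τ = 0 is zero. -/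
open Real Filter MeasureTheory intervalIntegral Set

noncomputable def Ee (f u0 : ℝ → ℝ) (τ : ℝ) : ℝ := Real.exp (-(∫ r in (0:ℝ)..τ, f (u0 r)))
noncomputable def Pphi (f u0 : ℝ → ℝ) (s : ℝ) : ℝ := Ee f u0 s / (deriv u0 s)^2
noncomputable def Ppsi (f g u0 : ℝ → ℝ) (s : ℝ) : ℝ :=
  Ee f u0 s * deriv g (u0 s) / (g (u0 s))^2
noncomputable def Hh (f g u0 : ℝ → ℝ) (s : ℝ) : ℝ := Ee f u0 s / (deriv u0 s * g (u0 s))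

theorem Ee_hasDerivAt {f u0 : ℝ → ℝ} (hc : Continuous fun r => f (u0 r)) (τ : ℝ) :
    HasDerivAt (Ee f u0) (-(f (u0 τ)) * Ee f u0 τ) τ := by
  have hF : HasDerivAt (fun u => ∫ r in (0:ℝ)..u, f (u0 r)) (f (u0 τ)) τ :=
    integral_hasDerivAt_right (hc.intervalIntegrable 0 τ)
      (hc.stronglyMeasurableAtFilter _ _) hc.continuousAt
  have := (hF.neg).exp
  show HasDerivAt (fun τ => Real.exp (-(∫ r in (0:ℝ)..τ, f (u0 r)))) _ τ
  simpa [Ee, mul_comm] using this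

theorem Ee_continuous {f u0 : ℝ → ℝ} (hc : Continuous fun r => f (u0 r)) :
    Continuous (Ee f u0) :=
  continuous_iff_continuousAt.2 fun x => (Ee_hasDerivAt hc x).continuousAt

theorem Hh_hasDerivAt {f g u0 : ℝ → ℝ} {x : ℝ}
    (hc : Continuous fun r => f (u0 r))
    (hode' : deriv (deriv u0) x = -(f (u0 x) * deriv u0 x + g (u0 x)))
    (hu0x : HasDerivAt u0 (deriv u0 x) x)
    (hvx : HasDerivAt (deriv u0) (deriv (deriv u0) x) x)
    (hgd : HasDerivAt g (deriv g (u0 x)) (u0 x))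
    (hvne : deriv u0 x ≠ 0) (hgne : g (u0 x) ≠ 0) :
    HasDerivAt (Hh f g u0) (Pphi f u0 x - Ppsi f g u0 x) x := by
  have hG : HasDerivAt (fun τ => g (u0 τ)) (deriv g (u0 x) * deriv u0 x) x := hgd.comp x hu0x
  have hden : HasDerivAt (fun τ => deriv u0 τ * g (u0 τ))
      (deriv (deriv u0) x * g (u0 x) + deriv u0 x * (deriv g (u0 x) * deriv u0 x)) x :=
    hvx.mul hG
  have hdne : deriv u0 x * g (u0 x) ≠ 0 := mul_ne_zero hvne hgne
  have h := (Ee_hasDerivAt hc x).div hden hdne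
  have : HasDerivAt (Hh f g u0)
      ((-(f (u0 x)) * Ee f u0 x * (deriv u0 x * g (u0 x)) -
        Ee f u0 x * (deriv (deriv u0) x * g (u0 x) + deriv u0 x * (deriv g (u0 x) * deriv u0 x))) /
        (deriv u0 x * g (u0 x)) ^ 2) x := h
  convert this using 1
  rw [hode']
  unfold Pphi Ppsi
  field_simp
  ring

/-- There is exactly one `τ̄ ∈ (0, πρ)` for which the extension at `τ = 0` of
`w11^{τ̄}(τ) = u̇0(τ) ∫_{τ̄}^τ e^{-F(s)}/u̇0(s)² ds` has vanishing derivative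
at `τ = 0`. -/
theorem unique_taubar
    (ρ : ℝ) (hρ : 0 < ρ)
    (f g : ℝ → ℝ) (hf : ContDiff ℝ (⊤ : ℕ∞) f) (hg : ContDiff ℝ (⊤ : ℕ∞) g)
    (u0 : ℝ → ℝ) (hu0 : ContDiff ℝ 3 u0)
    (hode : ∀ τ : ℝ, deriv (deriv u0) τ + f (u0 τ) * deriv u0 τ + g (u0 τ) = 0)
    (h1 : deriv u0 0 = 0) (h1' : deriv u0 (π * ρ) = 0)
    (h2 : deriv (deriv u0) 0 ≠ 0)
    (hne : ∀ τ ∈ Set.Ioo (0:ℝ) (π * ρ), deriv u0 τ ≠ 0) :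
    ∃! τb : ℝ, τb ∈ Set.Ioo (0:ℝ) (π * ρ) ∧ ∃ L : ℝ,
      Tendsto (fun τ : ℝ => deriv u0 τ *
          ∫ s in τb..τ, Real.exp (-(∫ r in (0:ℝ)..s, f (u0 r))) / (deriv u0 s) ^ 2)
        (nhdsWithin 0 (Set.Ioi 0)) (nhds L) ∧
      HasDerivWithinAt
        (fun τ : ℝ => if τ = 0 then L else deriv u0 τ *
          ∫ s in τb..τ, Real.exp (-(∫ r in (0:ℝ)..s, f (u0 r))) / (deriv u0 s) ^ 2)
        0 (Set.Ici 0) 0 := by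
  have hπρ : 0 < π * ρ := mul_pos pi_pos hρ
  -- basic regularity
  have hu0d : Differentiable ℝ u0 := hu0.differentiable (by norm_num)
  have hvC2 : ContDiff ℝ 2 (deriv u0) := by
    have h3 : (3 : WithTop ℕ∞) = 2 + 1 := by norm_num
    exact (contDiff_succ_iff_deriv.mp (h3 ▸ hu0)).2.2
  have hvd : Differentiable ℝ (deriv u0) := hvC2.differentiable (by norm_num)
  have hvc : Continuous (deriv u0) := hvd.continuous
  have hfu : Continuous fun r => f (u0 r) := hf.continuous.comp hu0d.continuous
  have hgu : Continuous fun r => g (u0 r) := hg.continuous.comp hu0d.continuous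
  have hgdiff : ∀ y, HasDerivAt g (deriv g y) y := fun y =>
    ((hg.differentiable (by simp)) y).hasDerivAt
  have hg'c : Continuous (deriv g) := (contDiff_one_iff_deriv.mp (hg.of_le (by simp))).2
  have hEc : Continuous (Ee f u0) := Ee_continuous hfu
  have hode' : ∀ τ, deriv (deriv u0) τ = -(f (u0 τ) * deriv u0 τ + g (u0 τ)) := fun τ => by
    have := hode τ; linarith
  have hg0 : g (u0 0) ≠ 0 := by
    have h0 := hode' 0
    rw [h1] at h0
    intro hz
    rw [hz] at h0
    simp at h0
    exact h2 h0
  -- choice of c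
  obtain ⟨c, hc0, hcπ, hcg⟩ :
      ∃ c : ℝ, 0 < c ∧ c < π * ρ ∧ ∀ x : ℝ, |x| ≤ c → g (u0 x) ≠ 0 := by
    have hev : ∀ᶠ x in nhds (0:ℝ), g (u0 x) ≠ 0 := hgu.continuousAt.eventually_ne hg0
    obtain ⟨ε, hε0, hball⟩ := Metric.eventually_nhds_iff_ball.mp hev
    refine ⟨min (ε/2) (π*ρ/2), by positivity, ?_, ?_⟩
    · exact lt_of_le_of_lt (min_le_right _ _) (half_lt_self hπρ)
    · intro x hx
      apply hball
      rw [Metric.mem_ball, Real.dist_eq, sub_zero]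
      calc |x| ≤ min (ε/2) (π*ρ/2) := hx
        _ ≤ ε/2 := min_le_left _ _
        _ < ε := half_lt_self hε0
  have hcIoo : c ∈ Set.Ioo (0:ℝ) (π * ρ) := ⟨hc0, hcπ⟩
  -- continuity of φ on (0, πρ)
  have hφcont : ContinuousOn (Pphi f u0) (Set.Ioo 0 (π * ρ)) := by
    apply ContinuousOn.div hEc.continuousOn ((hvc.pow 2).continuousOn)
    exact fun x hx => pow_ne_zero 2 (hne x hx)
  have hsubIoo : ∀ x ∈ Set.Ioo (0:ℝ) (π*ρ), ∀ y ∈ Set.Ioo (0:ℝ) (π*ρ),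
      Set.uIcc x y ⊆ Set.Ioo (0:ℝ) (π*ρ) := by
    intro x hx y hy z hz
    rw [Set.uIcc_eq_union] at hz
    rcases hz with h | h
    · exact ⟨lt_of_lt_of_le hx.1 h.1, lt_of_le_of_lt h.2 hy.2⟩
    · exact ⟨lt_of_lt_of_le hy.1 h.1, lt_of_le_of_lt h.2 hx.2⟩
  have hφint : ∀ x ∈ Set.Ioo (0:ℝ) (π*ρ), ∀ y ∈ Set.Ioo (0:ℝ) (π*ρ),
      IntervalIntegrable (Pphi f u0) volume x y := fun x hx y hy =>
    (hφcont.mono (hsubIoo x hx y hy)).intervalIntegrable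
  -- ψ integrability near 0
  have hψcont : ContinuousOn (Ppsi f g u0) {x : ℝ | g (u0 x) ≠ 0} := by
    apply ContinuousOn.div
    · exact (hEc.mul (hg'c.comp hu0d.continuous)).continuousOn
    · exact (hgu.pow 2).continuousOn
    · exact fun x hx => pow_ne_zero 2 hx
  have hUopen : IsOpen {x : ℝ | g (u0 x) ≠ 0} := isOpen_compl_singleton.preimage hgu
  have hccU : Set.Icc (-c) c ⊆ {x : ℝ | g (u0 x) ≠ 0} := fun x hx =>
    hcg x (abs_le.2 ⟨hx.1, hx.2⟩)
  have hψint : ∀ x ∈ Set.Icc (-c) c, ∀ y ∈ Set.Icc (-c) c,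
      IntervalIntegrable (Ppsi f g u0) volume x y := fun x hx y hy =>
    ((hψcont.mono hccU).mono (Set.uIcc_subset_Icc hx hy)).intervalIntegrable
  -- main definitions
  set A := deriv (deriv u0) 0 with hA
  set B : ℝ := -(f (u0 0)) / g (u0 0) with hB
  set J0 : ℝ := -(Hh f g u0 c) + ∫ s in c..(0:ℝ), Ppsi f g u0 s with hJ0
  set R : ℝ → ℝ := fun x => ∫ s in x..c, Pphi f u0 s with hR
  set K : ℝ := -B/A - J0 with hK
  set L0 : ℝ := 1 / g (u0 0) with hL0
  -- the regular representative
  set W : ℝ → ℝ → ℝ := fun τb τ => Ee f u0 τ / g (u0 τ) +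
      deriv u0 τ * (R τb + (-(Hh f g u0 c) + ∫ s in c..τ, Ppsi f g u0 s)) with hW
  -- identity on (0, c)
  have hident : ∀ τb ∈ Set.Ioo (0:ℝ) (π*ρ), ∀ τ ∈ Set.Ioo (0:ℝ) c,
      deriv u0 τ * (∫ s in τb..τ, Pphi f u0 s) = W τb τ := by
    intro τb hτb τ hτ
    have hτIoo : τ ∈ Set.Ioo (0:ℝ) (π*ρ) := ⟨hτ.1, hτ.2.trans hcπ⟩
    have hτcc : τ ∈ Set.Icc (-c) c := ⟨by nlinarith [hτ.1, hc0], le_of_lt hτ.2⟩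
    have hccc : c ∈ Set.Icc (-c) c := ⟨by linarith, le_refl c⟩
    have hvτ : deriv u0 τ ≠ 0 := hne τ hτIoo
    have hsplit : (∫ s in τb..τ, Pphi f u0 s)
        = (∫ s in τb..c, Pphi f u0 s) + ∫ s in c..τ, Pphi f u0 s :=
      (integral_add_adjacent_intervals (hφint τb hτb c hcIoo) (hφint c hcIoo τ hτIoo)).symm
    have hsub2 : Set.uIcc τ c ⊆ Set.Ioo 0 (π*ρ) := hsubIoo τ hτIoo c hcIoo
    have hsubcc : Set.uIcc τ c ⊆ Set.Icc (-c) c := Set.uIcc_subset_Icc hτcc hccc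
    have hHD : ∀ x ∈ Set.uIcc c τ, HasDerivAt (Hh f g u0) (Pphi f u0 x - Ppsi f g u0 x) x := by
      intro x hx
      rw [Set.uIcc_comm] at hx
      exact Hh_hasDerivAt hfu (hode' x) ((hu0d x).hasDerivAt) ((hvd x).hasDerivAt)
        (hgdiff (u0 x)) (hne x (hsub2 hx)) (hccU (hsubcc hx))
    have hψi : IntervalIntegrable (Ppsi f g u0) volume c τ := hψint c hccc τ hτcc
    have hφi : IntervalIntegrable (Pphi f u0) volume c τ := hφint c hcIoo τ hτIoo
    have hFTC : (∫ s in c..τ, (Pphi f u0 s - Ppsi f g u0 s)) = Hh f g u0 τ - Hh f g u0 c :=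
      integral_eq_sub_of_hasDerivAt hHD (hφi.sub hψi)
    rw [integral_sub hφi hψi] at hFTC
    have hvH : deriv u0 τ * Hh f g u0 τ = Ee f u0 τ / g (u0 τ) := by
      unfold Hh
      field_simp
    rw [hsplit, hW]
    simp only [hR]
    have hexp : (∫ s in c..τ, Pphi f u0 s)
        = Hh f g u0 τ - Hh f g u0 c + ∫ s in c..τ, Ppsi f g u0 s := by linarith
    rw [hexp]
    linear_combination hvH
  -- derivative of W at 0
  have hWderiv : ∀ τb ∈ Set.Ioo (0:ℝ) (π*ρ), HasDerivAt (W τb) (B + A * (R τb + J0)) 0 := by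
    intro τb hτb
    have h0cc : (0:ℝ) ∈ Set.Icc (-c) c := ⟨by linarith, le_of_lt hc0⟩
    have hccc : c ∈ Set.Icc (-c) c := ⟨by linarith, le_refl c⟩
    have hG0 : HasDerivAt (fun τ => g (u0 τ)) (deriv g (u0 0) * deriv u0 0) 0 :=
      (hgdiff (u0 0)).comp 0 (hu0d 0).hasDerivAt
    have hEG : HasDerivAt (fun τ => Ee f u0 τ / g (u0 τ)) B 0 := by
      have h := (Ee_hasDerivAt hfu 0).fun_div hG0 hg0
      refine h.congr_deriv ?_
      rw [hB, h1]
      have hE0 : Ee f u0 0 = 1 := by simp [Ee]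
      rw [hE0]
      field_simp
      ring
    have hg0mem : (0:ℝ) ∈ {x : ℝ | g (u0 x) ≠ 0} := hg0
    have hIψ : HasDerivAt (fun τ => ∫ s in c..τ, Ppsi f g u0 s) (Ppsi f g u0 0) 0 :=
      integral_hasDerivAt_right (hψint c hccc 0 h0cc)
        (hψcont.stronglyMeasurableAtFilter hUopen 0 hg0mem)
        (hψcont.continuousAt (hUopen.mem_nhds hg0mem))
    have hlin : HasDerivAt (fun τ => R τb + (-(Hh f g u0 c) + ∫ s in c..τ, Ppsi f g u0 s))
        (Ppsi f g u0 0) 0 := by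
      simpa using ((hIψ.const_add (-(Hh f g u0 c))).const_add (R τb))
    have hprod := (hvd 0).hasDerivAt.fun_mul hlin
    have hsum := hEG.fun_add hprod
    rw [h1] at hsum
    simpa [hW, hJ0, hA] using hsum
  have hW0 : ∀ τb, W τb 0 = L0 := by
    intro τb
    simp [hW, h1, hL0, Ee, intervalIntegral.integral_same]
  -- tendsto statement
  have htend : ∀ τb ∈ Set.Ioo (0:ℝ) (π*ρ),
      Tendsto (fun τ : ℝ => deriv u0 τ *
          ∫ s in τb..τ, Real.exp (-(∫ r in (0:ℝ)..s, f (u0 r))) / (deriv u0 s) ^ 2)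
        (nhdsWithin 0 (Set.Ioi 0)) (nhds L0) := by
    intro τb hτb
    have hcont : ContinuousAt (W τb) 0 := (hWderiv τb hτb).continuousAt
    have h1t : Tendsto (W τb) (nhdsWithin 0 (Set.Ioi 0)) (nhds L0) := by
      rw [← hW0 τb]
      exact hcont.continuousWithinAt
    apply h1t.congr'
    filter_upwards [Ioo_mem_nhdsGT_of_mem (Set.left_mem_Ico.2 hc0)] with x hx
    exact (hident τb hτb x hx).symm
  -- extension derivative
  have hextd : ∀ τb ∈ Set.Ioo (0:ℝ) (π*ρ),
      HasDerivWithinAt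
        (fun τ : ℝ => if τ = 0 then L0 else deriv u0 τ *
          ∫ s in τb..τ, Real.exp (-(∫ r in (0:ℝ)..s, f (u0 r))) / (deriv u0 s) ^ 2)
        (B + A * (R τb + J0)) (Set.Ici 0) 0 := by
    intro τb hτb
    have hmem : Set.Ico 0 c ∈ nhdsWithin (0:ℝ) (Set.Ici 0) := by
      rw [← Set.Ici_inter_Iio]
      exact Filter.inter_mem self_mem_nhdsWithin
        (mem_nhdsWithin_of_mem_nhds (Iio_mem_nhds hc0))
    have heq : (fun τ : ℝ => if τ = 0 then L0 else deriv u0 τ *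
        ∫ s in τb..τ, Real.exp (-(∫ r in (0:ℝ)..s, f (u0 r))) / (deriv u0 s) ^ 2)
          =ᶠ[nhdsWithin (0:ℝ) (Set.Ici 0)] W τb := by
      filter_upwards [hmem] with x hx
      by_cases hx0 : x = 0
      · subst hx0
        simp [hW0]
      · rw [if_neg hx0]
        exact hident τb hτb x ⟨lt_of_le_of_ne hx.1 (Ne.symm hx0), hx.2⟩
    exact ((hWderiv τb hτb).hasDerivWithinAt).congr_of_eventuallyEq heq
      ((if_pos rfl).trans (hW0 τb).symm)
  -- characterization
  have hchar : ∀ τb ∈ Set.Ioo (0:ℝ) (π*ρ),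
      ((∃ L : ℝ,
      Tendsto (fun τ : ℝ => deriv u0 τ *
          ∫ s in τb..τ, Real.exp (-(∫ r in (0:ℝ)..s, f (u0 r))) / (deriv u0 s) ^ 2)
        (nhdsWithin 0 (Set.Ioi 0)) (nhds L) ∧
      HasDerivWithinAt
        (fun τ : ℝ => if τ = 0 then L else deriv u0 τ *
          ∫ s in τb..τ, Real.exp (-(∫ r in (0:ℝ)..s, f (u0 r))) / (deriv u0 s) ^ 2)
        0 (Set.Ici 0) 0) ↔ R τb = K) := by
    intro τb hτb
    have hAne : A ≠ 0 := h2
    constructor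
    · rintro ⟨L, hT, hD⟩
      have hLL : L = L0 := tendsto_nhds_unique hT (htend τb hτb)
      subst hLL
      have hu : UniqueDiffWithinAt ℝ (Set.Ici (0:ℝ)) 0 := uniqueDiffOn_Ici 0 0 Set.self_mem_Ici
      have e1 := hD.derivWithin hu
      have e2 := (hextd τb hτb).derivWithin hu
      have hz : B + A * (R τb + J0) = 0 := by rw [← e2, e1]
      rw [hK]
      field_simp
      linarith [mul_comm A (R τb)]
    · intro hRK
      refine ⟨L0, htend τb hτb, ?_⟩
      have hthis := hextd τb hτb
      rw [hRK] at hthis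
      have hz : B + A * (K + J0) = 0 := by
        rw [hK]
        field_simp
        ring
      rwa [hz] at hthis
  -- strict antitonicity of R
  have hRanti : ∀ x ∈ Set.Ioo (0:ℝ) (π*ρ), ∀ y ∈ Set.Ioo (0:ℝ) (π*ρ), x < y → R y < R x := by
    intro x hx y hy hxy
    have hpos : 0 < ∫ s in x..y, Pphi f u0 s := by
      apply intervalIntegral_pos_of_pos_on (hφint x hx y hy)
      · intro s hs
        have hsIoo : s ∈ Set.Ioo (0:ℝ) (π*ρ) := ⟨lt_trans hx.1 hs.1, lt_trans hs.2 hy.2⟩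
        exact div_pos (Real.exp_pos _) (pow_two_pos_of_ne_zero (hne s hsIoo))
      · exact hxy
    have hadd := integral_add_adjacent_intervals (hφint x hx y hy) (hφint y hy c hcIoo)
    simp only [hR]
    have hRx : (∫ s in x..c, Pphi f u0 s)
        = (∫ s in x..y, Pphi f u0 s) + ∫ s in y..c, Pphi f u0 s := hadd.symm
    linarith
  -- existence of τb with R τb = K
  have hddc : Continuous (deriv (deriv u0)) := by
    rw [show deriv (deriv u0) = fun τ => -(f (u0 τ) * deriv u0 τ + g (u0 τ)) from funext hode']
    exact ((hfu.mul hvc).add hgu).neg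
  -- lower bound for R near 0 and upper bound near πρ
  obtain ⟨M0, hM0⟩ := (isCompact_Icc (a := (0:ℝ)) (b := c)).exists_bound_of_continuousOn
    hddc.continuousOn
  set M1 : ℝ := max M0 1 with hM1
  have hM1pos : (0:ℝ) < M1 := lt_of_lt_of_le one_pos (le_max_right _ _)
  have hvb : ∀ s ∈ Set.Icc (0:ℝ) c, |deriv u0 s| ≤ M1 * s := by
    intro s hs
    have key : ‖deriv u0 s - deriv u0 0‖ ≤ M1 * ‖s - (0:ℝ)‖ :=
      Convex.norm_image_sub_le_of_norm_hasDerivWithin_le (f' := deriv (deriv u0))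
        (fun x hx => (hvd x).hasDerivAt.hasDerivWithinAt)
        (fun x hx => le_trans (hM0 x hx) (le_max_left _ _))
        (convex_Icc 0 c) (Set.left_mem_Icc.2 (le_of_lt hc0)) hs
    rw [h1, sub_zero, sub_zero] at key
    rwa [Real.norm_eq_abs, Real.norm_eq_abs, abs_of_nonneg hs.1] at key
  obtain ⟨s0, hs0mem, hs0min⟩ := (isCompact_Icc (a := (0:ℝ)) (b := c)).exists_isMinOn
    ⟨0, Set.left_mem_Icc.2 (le_of_lt hc0)⟩ hEc.continuousOn
  set e1 : ℝ := Ee f u0 s0 with he1def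
  have he1pos : 0 < e1 := Real.exp_pos _
  have he1 : ∀ s ∈ Set.Icc (0:ℝ) c, e1 ≤ Ee f u0 s := fun s hs => isMinOn_iff.mp hs0min s hs
  have hlow : ∀ x ∈ Set.Ioo (0:ℝ) c, e1/M1^2 * (x⁻¹ - c⁻¹) ≤ R x := by
    intro x hx
    have hxIoo : x ∈ Set.Ioo (0:ℝ) (π*ρ) := ⟨hx.1, hx.2.trans hcπ⟩
    have hxc : x ≤ c := le_of_lt hx.2
    have huIcc : Set.uIcc x c = Set.Icc x c := Set.uIcc_of_le hxc
    have hanti : ∀ s ∈ Set.uIcc x c,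
        HasDerivAt (fun y : ℝ => -(e1/M1^2) * y⁻¹) (e1/M1^2 * (s^2)⁻¹) s := by
      intro s hs
      rw [huIcc] at hs
      have hs0 : s ≠ 0 := ne_of_gt (lt_of_lt_of_le hx.1 hs.1)
      have := (hasDerivAt_inv hs0).const_mul (-(e1/M1^2))
      refine this.congr_deriv ?_
      field_simp
    have hintl : IntervalIntegrable (fun s : ℝ => e1/M1^2 * (s^2)⁻¹) volume x c := by
      apply ContinuousOn.intervalIntegrable
      apply ContinuousOn.mul continuousOn_const
      apply ContinuousOn.inv₀ (continuousOn_id.pow 2)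
      intro s hs
      rw [huIcc] at hs
      exact pow_ne_zero 2 (ne_of_gt (lt_of_lt_of_le hx.1 hs.1))
    have hFTCl := integral_eq_sub_of_hasDerivAt hanti hintl
    have hpt : ∀ s ∈ Set.Icc x c, e1/M1^2 * (s^2)⁻¹ ≤ Pphi f u0 s := by
      intro s hs
      have hs0 : 0 < s := lt_of_lt_of_le hx.1 hs.1
      have hsI : s ∈ Set.Icc (0:ℝ) c := ⟨le_of_lt hs0, hs.2⟩
      have hsne : deriv u0 s ≠ 0 := hne s ⟨hs0, lt_of_le_of_lt hs.2 hcπ⟩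
      have hv2 : deriv u0 s ^ 2 ≤ (M1 * s)^2 := by
        rw [← sq_abs (deriv u0 s)]
        exact pow_le_pow_left₀ (abs_nonneg _) (hvb s hsI) 2
      have hv2pos : 0 < (deriv u0 s)^2 := pow_two_pos_of_ne_zero hsne
      have hdd : e1 / (M1*s)^2 ≤ Ee f u0 s / (deriv u0 s)^2 :=
        div_le_div₀ (le_of_lt (Real.exp_pos _)) (he1 s hsI) hv2pos hv2
      calc e1/M1^2 * (s^2)⁻¹ = e1 / (M1*s)^2 := by rw [mul_pow, ← div_div]; exact (div_eq_mul_inv _ _).symm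
        _ ≤ Ee f u0 s / (deriv u0 s)^2 := hdd
        _ = Pphi f u0 s := rfl
    have hmono := integral_mono_on hxc hintl (hφint x hxIoo c hcIoo) hpt
    rw [hFTCl] at hmono
    simp only [hR]
    calc e1/M1^2 * (x⁻¹ - c⁻¹) = -(e1 / M1 ^ 2) * c⁻¹ - -(e1 / M1 ^ 2) * x⁻¹ := by ring
      _ ≤ ∫ s in x..c, Pphi f u0 s := hmono
  have htop : Tendsto R (nhdsWithin (0:ℝ) (Set.Ioi 0)) atTop := by
    have h2t : Tendsto (fun x : ℝ => e1/M1^2 * (x⁻¹ - c⁻¹))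
        (nhdsWithin (0:ℝ) (Set.Ioi 0)) atTop := by
      apply Tendsto.const_mul_atTop (by positivity)
      simpa [sub_eq_add_neg] using
        tendsto_atTop_add_const_right (nhdsWithin (0:ℝ) (Set.Ioi 0)) (-c⁻¹)
          tendsto_inv_nhdsGT_zero
    apply tendsto_atTop_mono' _ _ h2t
    filter_upwards [Ioo_mem_nhdsGT_of_mem (Set.left_mem_Ico.2 hc0)] with x hx
    exact hlow x hx
  -- right side
  obtain ⟨M0', hM0'⟩ := (isCompact_Icc (a := c) (b := π*ρ)).exists_bound_of_continuousOn
    hddc.continuousOn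
  set M2 : ℝ := max M0' 1 with hM2
  have hM2pos : (0:ℝ) < M2 := lt_of_lt_of_le one_pos (le_max_right _ _)
  have hvb' : ∀ s ∈ Set.Icc c (π*ρ), |deriv u0 s| ≤ M2 * (π*ρ - s) := by
    intro s hs
    have key : ‖deriv u0 s - deriv u0 (π*ρ)‖ ≤ M2 * ‖s - π*ρ‖ :=
      Convex.norm_image_sub_le_of_norm_hasDerivWithin_le (f' := deriv (deriv u0))
        (fun x hx => (hvd x).hasDerivAt.hasDerivWithinAt)
        (fun x hx => le_trans (hM0' x hx) (le_max_left _ _))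
        (convex_Icc c (π*ρ)) (Set.right_mem_Icc.2 (le_of_lt hcπ)) hs
    rw [h1', sub_zero] at key
    rw [Real.norm_eq_abs, Real.norm_eq_abs, abs_sub_comm s (π*ρ),
      abs_of_nonneg (by linarith [hs.2] : (0:ℝ) ≤ π*ρ - s)] at key
    exact key
  obtain ⟨s1, hs1mem, hs1min⟩ := (isCompact_Icc (a := c) (b := π*ρ)).exists_isMinOn
    ⟨c, Set.left_mem_Icc.2 (le_of_lt hcπ)⟩ hEc.continuousOn
  set e2 : ℝ := Ee f u0 s1 with he2def
  have he2pos : 0 < e2 := Real.exp_pos _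
  have he2 : ∀ s ∈ Set.Icc c (π*ρ), e2 ≤ Ee f u0 s := fun s hs => isMinOn_iff.mp hs1min s hs
  have hup : ∀ x ∈ Set.Ioo c (π*ρ), R x ≤ e2/M2^2 * ((π*ρ-c)⁻¹ - (π*ρ-x)⁻¹) := by
    intro x hx
    have hxIoo : x ∈ Set.Ioo (0:ℝ) (π*ρ) := ⟨lt_trans hc0 hx.1, hx.2⟩
    have hcx : c ≤ x := le_of_lt hx.1
    have huIcc : Set.uIcc c x = Set.Icc c x := Set.uIcc_of_le hcx
    have hanti : ∀ s ∈ Set.uIcc c x,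
        HasDerivAt (fun y : ℝ => e2/M2^2 * (π*ρ - y)⁻¹) (e2/M2^2 * ((π*ρ-s)^2)⁻¹) s := by
      intro s hs
      rw [huIcc] at hs
      have hsπ : π*ρ - s ≠ 0 := ne_of_gt (by linarith [hs.2, hx.2])
      have hinner : HasDerivAt (fun y : ℝ => π*ρ - y) (-1) s := by
        simpa using (hasDerivAt_id s).const_sub (π*ρ)
      have := ((hasDerivAt_inv hsπ).comp s hinner).const_mul (e2/M2^2)
      refine this.congr_deriv ?_
      field_simp
    have hintl : IntervalIntegrable (fun s : ℝ => e2/M2^2 * ((π*ρ-s)^2)⁻¹) volume c x := by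
      apply ContinuousOn.intervalIntegrable
      apply ContinuousOn.mul continuousOn_const
      apply ContinuousOn.inv₀ ((continuousOn_const.sub continuousOn_id).pow 2)
      intro s hs
      rw [huIcc] at hs
      have hsx : s ≤ x := hs.2
      have : s < π*ρ := lt_of_le_of_lt hsx hx.2
      exact pow_ne_zero 2 (ne_of_gt (by simp only [Pi.sub_apply, id_eq, sub_pos]; exact this))
    have hFTCl := integral_eq_sub_of_hasDerivAt hanti hintl
    have hpt : ∀ s ∈ Set.Icc c x, e2/M2^2 * ((π*ρ-s)^2)⁻¹ ≤ Pphi f u0 s := by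
      intro s hs
      have hsπ : s < π*ρ := lt_of_le_of_lt hs.2 hx.2
      have hsI : s ∈ Set.Icc c (π*ρ) := ⟨hs.1, le_of_lt hsπ⟩
      have hsne : deriv u0 s ≠ 0 := hne s ⟨lt_of_lt_of_le hc0 hs.1, hsπ⟩
      have hv2 : deriv u0 s ^ 2 ≤ (M2 * (π*ρ-s))^2 := by
        rw [← sq_abs (deriv u0 s)]
        exact pow_le_pow_left₀ (abs_nonneg _) (hvb' s hsI) 2
      have hv2pos : 0 < (deriv u0 s)^2 := pow_two_pos_of_ne_zero hsne
      have hdd : e2 / (M2*(π*ρ-s))^2 ≤ Ee f u0 s / (deriv u0 s)^2 :=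
        div_le_div₀ (le_of_lt (Real.exp_pos _)) (he2 s hsI) hv2pos hv2
      calc e2/M2^2 * ((π*ρ-s)^2)⁻¹ = e2 / (M2*(π*ρ-s))^2 := by rw [mul_pow, ← div_div]; exact (div_eq_mul_inv _ _).symm
        _ ≤ Ee f u0 s / (deriv u0 s)^2 := hdd
        _ = Pphi f u0 s := rfl
    have hmono := integral_mono_on hcx hintl (hφint c hcIoo x hxIoo) hpt
    rw [hFTCl] at hmono
    have hsymm : R x = -(∫ s in c..x, Pphi f u0 s) := by
      simp only [hR]
      rw [integral_symm]
    rw [hsymm]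
    have : e2 / M2 ^ 2 * (π * ρ - x)⁻¹ - e2 / M2 ^ 2 * (π * ρ - c)⁻¹
        ≤ ∫ s in c..x, Pphi f u0 s := hmono
    linarith
  have hbot : Tendsto R (nhdsWithin (π*ρ) (Set.Iio (π*ρ))) atBot := by
    have hsub : Tendsto (fun x : ℝ => π*ρ - x) (nhdsWithin (π*ρ) (Set.Iio (π*ρ)))
        (nhdsWithin (0:ℝ) (Set.Ioi 0)) := by
      apply tendsto_nhdsWithin_of_tendsto_nhds_of_eventually_within
      · have h0 : Tendsto (fun x : ℝ => π*ρ - x) (nhds (π*ρ)) (nhds 0) := by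
          have hc' : Continuous fun x : ℝ => π*ρ - x := continuous_const.sub continuous_id
          have := hc'.tendsto (π*ρ)
          simpa using this
        exact h0.mono_left nhdsWithin_le_nhds
      · filter_upwards [self_mem_nhdsWithin] with x hx
        simp only [Set.mem_Ioi, sub_pos]
        exact hx
    have hinv : Tendsto (fun x : ℝ => (π*ρ - x)⁻¹) (nhdsWithin (π*ρ) (Set.Iio (π*ρ))) atTop :=
      tendsto_inv_nhdsGT_zero.comp hsub
    have h3 : Tendsto (fun x : ℝ => (π*ρ-c)⁻¹ - (π*ρ-x)⁻¹)
        (nhdsWithin (π*ρ) (Set.Iio (π*ρ))) atBot := by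
      simpa [sub_eq_add_neg] using
        tendsto_atBot_add_const_left _ ((π*ρ-c)⁻¹) (tendsto_neg_atTop_atBot.comp hinv)
    have h2t : Tendsto (fun x : ℝ => e2/M2^2 * ((π*ρ-c)⁻¹ - (π*ρ-x)⁻¹))
        (nhdsWithin (π*ρ) (Set.Iio (π*ρ))) atBot :=
      (tendsto_const_mul_atBot_of_pos (div_pos he2pos (pow_pos hM2pos 2))).2 h3
    apply tendsto_atBot_mono' _ _ h2t
    filter_upwards [Ioo_mem_nhdsLT_of_mem ⟨hcπ, le_refl _⟩] with x hx
    exact hup x hx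
  have hexist : ∃ τb ∈ Set.Ioo (0:ℝ) (π*ρ), R τb = K := by
    have h1ev : ∀ᶠ x in nhdsWithin (0:ℝ) (Set.Ioi 0), K ≤ R x := htop.eventually_ge_atTop K
    have h2ev : ∀ᶠ x in nhdsWithin (π*ρ) (Set.Iio (π*ρ)), R x ≤ K := hbot.eventually_le_atBot K
    obtain ⟨x1, hx1K, hx1mem⟩ := (h1ev.and (Filter.eventually_of_mem
      (Ioo_mem_nhdsGT_of_mem (Set.left_mem_Ico.2 hc0)) fun x hx => hx)).exists
    obtain ⟨x2, hx2K, hx2mem⟩ := (h2ev.and (Filter.eventually_of_mem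
      (Ioo_mem_nhdsLT_of_mem ⟨hcπ, le_refl _⟩) fun x hx => hx)).exists
    have hx12 : x1 < x2 := lt_trans hx1mem.2 hx2mem.1
    have hIccsub : Set.Icc x1 x2 ⊆ Set.Ioo (0:ℝ) (π*ρ) := fun z hz =>
      ⟨lt_of_lt_of_le hx1mem.1 hz.1, lt_of_le_of_lt hz.2 hx2mem.2⟩
    have hRcont : ContinuousOn R (Set.Icc x1 x2) := by
      intro y hy
      have hyI := hIccsub hy
      have hd : HasDerivAt R (-(Pphi f u0 y)) y :=
        integral_hasDerivAt_left (hφint y hyI c hcIoo)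
          (hφcont.stronglyMeasurableAtFilter isOpen_Ioo y hyI)
          (hφcont.continuousAt (isOpen_Ioo.mem_nhds hyI))
      exact hd.continuousAt.continuousWithinAt
    have hKmem : K ∈ Set.Icc (R x2) (R x1) := ⟨hx2K, hx1K⟩
    obtain ⟨τb, hτbmem, hτbval⟩ := intermediate_value_Icc' (le_of_lt hx12) hRcont hKmem
    exact ⟨τb, hIccsub hτbmem, hτbval⟩
  obtain ⟨τb, hτb, hRK⟩ := hexist
  refine ⟨τb, ⟨hτb, (hchar τb hτb).2 hRK⟩, ?_⟩
  rintro y ⟨hy, hP⟩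
  have hRy : R y = K := (hchar y hy).1 hP
  by_contra hne'
  rcases lt_or_gt_of_ne hne' with h | h
  · exact absurd (hRy ▸ hRK ▸ hRanti y hy τb hτb h) (lt_irrefl _)
  · exact absurd (hRK ▸ hRy ▸ hRanti τb hτb y hy h) (lt_irrefl _)
end
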